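/- Let Z = Σ_{i=1}^N X_i be a sum of N nonnegative random variables. Then the complementary CDF of Z satisfies F̄_Z(x) ≤ min(1, (F̄_{X_1} ⊗ F̄_{X_2} ⊗ ⋯ ⊗ F̄_{X_N})(x)) for all x ≥ 0, where ⊗ is the min-plus convolution. -/
import Mathlib


open MeasureTheory Set

/-- Min-plus convolution of two bounding functions. -/
noncomputable def minPlus (f g : ℝ → ℝ) : ℝ → ℝ :=
  fun x => sInf ((fun τ => f τ + g (x - τ)) '' Set.Icc 0 x)

/-- Iterated min-plus convolution of a list of bounding functions. -/
noncomputable def iterConv : List (ℝ → ℝ) → (ℝ → ℝ)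
  | [] => fun _ => 0
  | [f] => f
  | f :: g :: rest => minPlus f (iterConv (g :: rest))

lemma list_bound {Ω : Type*} [MeasurableSpace Ω] (μ : Measure Ω) [IsProbabilityMeasure μ] :
    ∀ (L : List (Ω → ℝ)), L ≠ [] → (∀ f ∈ L, ∀ ω, 0 ≤ f ω) →
    ∀ x, 0 ≤ x →
      (μ {ω | x < (L.map (fun f => f ω)).sum}).toReal ≤
        iterConv (L.map (fun f => fun y => (μ {ω | y < f ω}).toReal)) x := by
  intro L
  induction L with
  | nil => intro h; exact absurd rfl h
  | cons f t IH =>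
    intro _ hnn x hx
    match t with
    | [] =>
      simp only [List.map_cons, List.map_nil, List.sum_cons, List.sum_nil, add_zero, iterConv]
      exact le_rfl
    | g :: r =>
      have hIH := IH (by simp)
        (fun h hh ω => hnn h (List.mem_cons_of_mem f hh) ω)
      simp only [List.map_cons, List.sum_cons, iterConv, minPlus]
      apply le_csInf (((Set.nonempty_Icc).mpr hx).image _)
      rintro b ⟨τ, hτ, rfl⟩
      obtain ⟨hτ0, hτx⟩ := hτ
      set S : Ω → ℝ := fun ω => (((g :: r).map (fun f => f ω)).sum) with hS
      have hsub : {ω | x < f ω + ((g :: r).map (fun f => f ω)).sum} ⊆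
          {ω | τ < f ω} ∪ {ω | x - τ < ((g :: r).map (fun f => f ω)).sum} := by
        intro ω hω
        by_contra hc
        simp only [Set.mem_union, Set.mem_setOf_eq, not_or, not_lt] at hc
        simp only [Set.mem_setOf_eq] at hω
        linarith [hc.1, hc.2]
      have h1 : μ {ω | x < f ω + ((g :: r).map (fun f => f ω)).sum} ≤
          μ {ω | τ < f ω} + μ {ω | x - τ < ((g :: r).map (fun f => f ω)).sum} :=
        (measure_mono hsub).trans (measure_union_le _ _)
      have h2 := ENNReal.toReal_mono
        (ENNReal.add_ne_top.mpr ⟨measure_ne_top _ _, measure_ne_top _ _⟩) h1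
      rw [ENNReal.toReal_add (measure_ne_top _ _) (measure_ne_top _ _)] at h2
      calc (μ {ω | x < f ω + ((g :: r).map (fun f => f ω)).sum}).toReal
          ≤ (μ {ω | τ < f ω}).toReal +
            (μ {ω | x - τ < ((g :: r).map (fun f => f ω)).sum}).toReal := h2
        _ ≤ (μ {ω | τ < f ω}).toReal +
            iterConv ((g :: r).map (fun f => fun y => (μ {ω | y < f ω}).toReal)) (x - τ) :=
            add_le_add le_rfl (hIH (x - τ) (by linarith))

/-- The CCDF of a sum of N nonnegative random variables is bounded by the iterated
min-plus convolution of the individual CCDFs (capped at 1). -/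
theorem stmt_1 {Ω : Type*} [MeasurableSpace Ω] (μ : Measure Ω) [IsProbabilityMeasure μ]
    {N : ℕ} (hN : 0 < N) (X : Fin N → Ω → ℝ) (hX : ∀ i ω, 0 ≤ X i ω) :
    ∀ x ≥ (0:ℝ),
      (μ {ω | x < ∑ i, X i ω}).toReal ≤
        min 1 (iterConv (List.ofFn (fun i => fun y => (μ {ω | y < X i ω}).toReal)) x) := by
  intro x hx
  refine le_min (by
    have := prob_le_one (μ := μ) (s := {ω | x < ∑ i, X i ω})
    simpa using ENNReal.toReal_mono (by simp) this) ?_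
  have key := list_bound μ (List.ofFn X)
    (by simp [List.ofFn_eq_nil_iff]; omega)
    (by
      intro f hf ω
      simp only [List.mem_ofFn] at hf
      obtain ⟨i, rfl⟩ := hf
      exact hX i ω) x hx
  have h1 : (List.ofFn X).map (fun f => fun y => (μ {ω | y < f ω}).toReal)
      = List.ofFn (fun i => fun y => (μ {ω | y < X i ω}).toReal) := by
    simp [List.map_ofFn]; rfl
  have h2 : ∀ ω, ((List.ofFn X).map (fun f => f ω)).sum = ∑ i, X i ω := by
    intro ω
    rw [List.map_ofFn, List.sum_ofFn]
    rfl
  simp only [h1, h2] at key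
  exact key
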